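/- Let CT be a caterpillar of length k ≥ 1 whose sequence of pendent-neighbour counts is an alternation λ_i ≤ 2 for stems and λ_i = 0 for trunks of the form 2^-(02^-)^{+r} (spine v_0…v_{2r} with λ_{2j} ∈ {1,2} and λ_{2j+1} = 0). Then β_b(CT) = 2·diam(CT) − 2 = 4r + 2. -/
import Mathlib


open SimpleGraph Finset
open scoped Classical

variable {V : Type*}

noncomputable def ecc [Fintype V] (G : SimpleGraph V) (v : V) : ℕ :=
  Finset.univ.sup (fun u => G.dist v u)

noncomputable def gdiam [Fintype V] (G : SimpleGraph V) : ℕ :=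
  Finset.univ.sup (fun v => ecc G v)

def IsIndepBroadcast [Fintype V] (G : SimpleGraph V) (f : V → ℕ) : Prop :=
  (∀ v, f v ≤ ecc G v) ∧
  ∀ u v, u ≠ v → 0 < f u → 0 < f v → max (f u) (f v) < G.dist u v

def cost [Fintype V] (f : V → ℕ) : ℕ := ∑ v, f v

noncomputable def betaB [Fintype V] (G : SimpleGraph V) : ℕ :=
  sSup {c | ∃ f, IsIndepBroadcast G f ∧ cost f = c}

abbrev CatV (k : ℕ) (lam : Fin (k+1) → ℕ) := Fin (k+1) ⊕ (Σ i : Fin (k+1), Fin (lam i))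

def caterpillar (k : ℕ) (lam : Fin (k+1) → ℕ) : SimpleGraph (CatV k lam) :=
  SimpleGraph.fromRel (fun u v => match u, v with
    | Sum.inl i, Sum.inl j => (i : ℕ) + 1 = (j : ℕ)
    | Sum.inl i, Sum.inr p => i = p.1
    | _, _ => False)

def numLeaves (k : ℕ) (lam : Fin (k+1) → ℕ) : ℕ := ∑ i, lam i

def numTrunks (k : ℕ) (lam : Fin (k+1) → ℕ) : ℕ :=
  (Finset.univ.filter (fun i : Fin (k+1) => lam i = 0)).card

def noAdjTrunks (k : ℕ) (lam : Fin (k+1) → ℕ) : Prop :=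
  ∀ i j : Fin (k+1), (i : ℕ) + 1 = (j : ℕ) → ¬(lam i = 0 ∧ lam j = 0)

def fstar (k : ℕ) (lam : Fin (k+1) → ℕ) (f : CatV k lam → ℕ) (i : Fin (k+1)) : ℕ :=
  f (Sum.inl i) + ∑ j, f (Sum.inr ⟨i, j⟩)


namespace CatAux

variable {k : ℕ} {lam : Fin (k+1) → ℕ}

def cproj : CatV k lam → ℕ := Sum.elim (fun i => (i : ℕ)) (fun p => (p.1 : ℕ))

def ell : CatV k lam → ℕ := Sum.elim (fun _ => 0) (fun _ => 1)

lemma adj_inl_inl {i j : Fin (k+1)} :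
    (caterpillar k lam).Adj (Sum.inl i) (Sum.inl j) ↔
      ((i : ℕ) + 1 = (j : ℕ) ∨ (j : ℕ) + 1 = (i : ℕ)) := by
  simp only [caterpillar, fromRel_adj]
  constructor
  · rintro ⟨-, h⟩; exact h
  · rintro h
    refine ⟨?_, h⟩
    intro he
    injection he with he'
    omega

lemma adj_inl_inr {i : Fin (k+1)} {p : Σ i : Fin (k+1), Fin (lam i)} :
    (caterpillar k lam).Adj (Sum.inl i) (Sum.inr p) ↔ i = p.1 := by
  simp only [caterpillar, fromRel_adj]
  constructor
  · rintro ⟨-, h | h⟩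
    · exact h
    · exact h.elim
  · rintro h; exact ⟨by simp, Or.inl h⟩

lemma not_adj_inr_inr {p q : Σ i : Fin (k+1), Fin (lam i)} :
    ¬ (caterpillar k lam).Adj (Sum.inr p) (Sum.inr q) := by
  simp only [caterpillar, fromRel_adj]
  rintro ⟨-, h | h⟩ <;> exact h

lemma adj_inr {p : Σ i : Fin (k+1), Fin (lam i)} {w : CatV k lam}
    (h : (caterpillar k lam).Adj (Sum.inr p) w) : w = Sum.inl p.1 := by
  cases w with
  | inl j => have := (adj_inl_inr.mp h.symm); rw [this]
  | inr q => exact absurd h not_adj_inr_inr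

lemma lip {u v : CatV k lam} (h : (caterpillar k lam).Adj u v) :
    Nat.dist (cproj u) (cproj v) ≤ 1 := by
  cases u with
  | inl i =>
    cases v with
    | inl j =>
      rcases adj_inl_inl.mp h with h' | h' <;> simp [cproj, Nat.dist] <;> omega
    | inr p =>
      have := adj_inl_inr.mp h
      simp [cproj, this, Nat.dist]
  | inr p =>
    have := adj_inr h
    subst this
    simp [cproj, Nat.dist]

lemma walk_lower {u v : CatV k lam} (w : (caterpillar k lam).Walk u v) :
    Nat.dist (cproj u) (cproj v) ≤ w.length := by
  induction w with
  | nil => simp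
  | @cons a b c h w ih =>
    calc Nat.dist (cproj a) (cproj c) ≤ Nat.dist (cproj a) (cproj b) + Nat.dist (cproj b) (cproj c) :=
          Nat.dist.triangle_inequality _ _ _
    _ ≤ 1 + w.length := Nat.add_le_add (lip h) ih
    _ = (SimpleGraph.Walk.cons h w).length := by simp [Walk.length_cons]; omega

lemma spine_walk : ∀ (d : ℕ) (i j : Fin (k+1)), (i : ℕ) + d = (j : ℕ) →
    ∃ w : (caterpillar k lam).Walk (Sum.inl i) (Sum.inl j), w.length = d := by
  intro d
  induction d with
  | zero =>
    intro i j h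
    have : i = j := Fin.ext (by omega)
    subst this
    exact ⟨Walk.nil, rfl⟩
  | succ d ih =>
    intro i j h
    have hi : (i : ℕ) + 1 < k + 1 := by have := j.isLt; omega
    set i' : Fin (k+1) := ⟨(i : ℕ) + 1, hi⟩ with hi'
    have hadj : (caterpillar k lam).Adj (Sum.inl i) (Sum.inl i') := adj_inl_inl.mpr (Or.inl rfl)
    obtain ⟨w, hw⟩ := ih i' j (by simp [hi']; omega)
    exact ⟨Walk.cons hadj w, by simp [Walk.length_cons, hw]⟩

lemma reach_spine (i j : Fin (k+1)) :
    (caterpillar k lam).Reachable (Sum.inl i) (Sum.inl j) := by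
  rcases Nat.le_total (i : ℕ) (j : ℕ) with h | h
  · obtain ⟨w, -⟩ := spine_walk ((j : ℕ) - (i : ℕ)) i j (by omega)
    exact ⟨w⟩
  · obtain ⟨w, -⟩ := spine_walk ((i : ℕ) - (j : ℕ)) j i (by omega)
    exact ⟨w.reverse⟩

lemma reach_inl (u : CatV k lam) :
    (caterpillar k lam).Reachable u (Sum.inl (⟨0, by omega⟩ : Fin (k+1))) := by
  cases u with
  | inl i => exact reach_spine i _
  | inr p =>
    have hadj : (caterpillar k lam).Adj (Sum.inr p) (Sum.inl p.1) := by
      exact (adj_inl_inr.mpr rfl).symm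
    exact (hadj.reachable).trans (reach_spine p.1 _)

lemma cat_connected : (caterpillar k lam).Connected := by
  rw [connected_iff]
  refine ⟨fun u v => (reach_inl u).trans (reach_inl v).symm, ⟨Sum.inl ⟨0, by omega⟩⟩⟩

lemma dist_inl_inl (i j : Fin (k+1)) :
    (caterpillar k lam).dist (Sum.inl i) (Sum.inl j) = Nat.dist (i : ℕ) (j : ℕ) := by
  refine le_antisymm ?_ ?_
  · rcases Nat.le_total (i : ℕ) (j : ℕ) with h | h
    · obtain ⟨w, hw⟩ := spine_walk (k := k) (lam := lam) ((j : ℕ) - (i : ℕ)) i j (by omega)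
      calc (caterpillar k lam).dist (Sum.inl i) (Sum.inl j) ≤ w.length := dist_le w
      _ = _ := by rw [hw, Nat.dist_eq_sub_of_le h]
    · obtain ⟨w, hw⟩ := spine_walk (k := k) (lam := lam) ((i : ℕ) - (j : ℕ)) j i (by omega)
      calc (caterpillar k lam).dist (Sum.inl i) (Sum.inl j) ≤ w.reverse.length := dist_le w.reverse
      _ = _ := by rw [Walk.length_reverse, hw, Nat.dist_eq_sub_of_le_right h]
  · obtain ⟨w, hw⟩ := (cat_connected (lam := lam)).exists_walk_length_eq_dist
      (Sum.inl i) (Sum.inl j)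
    have := walk_lower w
    rw [hw] at this
    simpa [cproj] using this

lemma dist_pendant (p : Σ i : Fin (k+1), Fin (lam i)) (v : CatV k lam)
    (h : v ≠ Sum.inr p) :
    (caterpillar k lam).dist (Sum.inr p) v = (caterpillar k lam).dist (Sum.inl p.1) v + 1 := by
  have hadj : (caterpillar k lam).Adj (Sum.inr p) (Sum.inl p.1) := (adj_inl_inr.mpr rfl).symm
  refine le_antisymm ?_ ?_
  · calc (caterpillar k lam).dist (Sum.inr p) v
        ≤ (caterpillar k lam).dist (Sum.inr p) (Sum.inl p.1)
          + (caterpillar k lam).dist (Sum.inl p.1) v := cat_connected.dist_triangle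
    _ ≤ 1 + (caterpillar k lam).dist (Sum.inl p.1) v := by
        have : (caterpillar k lam).dist (Sum.inr p) (Sum.inl p.1) = 1 :=
          dist_eq_one_iff_adj.mpr hadj
        omega
    _ = _ := by omega
  · obtain ⟨w, hw⟩ := (cat_connected (lam := lam)).exists_walk_length_eq_dist (Sum.inr p) v
    cases w with
    | nil => exact absurd rfl h
    | @cons _ b _ hab w' =>
      have hb : b = Sum.inl p.1 := adj_inr hab
      subst hb
      have : (caterpillar k lam).dist (Sum.inl p.1) v ≤ w'.length := dist_le w'
      rw [Walk.length_cons] at hw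
      omega

lemma dist_formula {u v : CatV k lam} (h : u ≠ v) :
    (caterpillar k lam).dist u v = Nat.dist (cproj u) (cproj v) + ell u + ell v := by
  cases u with
  | inl i =>
    cases v with
    | inl j => simp [dist_inl_inl, cproj, ell]
    | inr p =>
      rw [SimpleGraph.dist_comm, dist_pendant p _ (by simp), dist_inl_inl]
      simp [cproj, ell, Nat.dist_comm]
  | inr p =>
    cases v with
    | inl j =>
      rw [dist_pendant p _ (by simp), dist_inl_inl]
      simp [cproj, ell]
    | inr q =>
      rw [dist_pendant p _ (Ne.symm h), SimpleGraph.dist_comm,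
        dist_pendant q _ (by simp), dist_inl_inl]
      simp [cproj, ell, Nat.dist_comm]

lemma dist_le_k2 (u v : CatV k lam) : (caterpillar k lam).dist u v ≤ k + 2 := by
  rcases eq_or_ne u v with rfl | h
  · simp [SimpleGraph.dist_self]
  · rw [dist_formula h]
    have h1 : cproj u ≤ k := by
      cases u with
      | inl i => exact Nat.lt_succ_iff.mp i.isLt
      | inr p => exact Nat.lt_succ_iff.mp p.1.isLt
    have h2 : cproj v ≤ k := by
      cases v with
      | inl i => exact Nat.lt_succ_iff.mp i.isLt
      | inr p => exact Nat.lt_succ_iff.mp p.1.isLt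
    have h3 : Nat.dist (cproj u) (cproj v) ≤ k := by
      rcases Nat.le_total (cproj u) (cproj v) with hle | hle
      · rw [Nat.dist_eq_sub_of_le hle]; omega
      · rw [Nat.dist_eq_sub_of_le_right hle]; omega
    have h4 : ell u ≤ 1 := by cases u <;> simp [ell]
    have h5 : ell v ≤ 1 := by cases v <;> simp [ell]
    omega

lemma ecc_le (v : CatV k lam) : ecc (caterpillar k lam) v ≤ k + 2 :=
  Finset.sup_le fun u _ => dist_le_k2 v u

lemma gdiam_le : gdiam (caterpillar k lam) ≤ k + 2 :=
  Finset.sup_le fun v _ => ecc_le v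

section Endpoints

def leafA (k : ℕ) (lam : Fin (k+1) → ℕ) (h0 : 0 < lam ⟨0, by omega⟩) : CatV k lam :=
  Sum.inr ⟨⟨0, by omega⟩, ⟨0, h0⟩⟩

def leafB (k : ℕ) (lam : Fin (k+1) → ℕ) (hkk : 0 < lam ⟨k, by omega⟩) : CatV k lam :=
  Sum.inr ⟨⟨k, by omega⟩, ⟨0, hkk⟩⟩

lemma leafA_ne_leafB (hk1 : 1 ≤ k) (h0 : 0 < lam ⟨0, by omega⟩) (hkk : 0 < lam ⟨k, by omega⟩) : leafA k lam h0 ≠ leafB k lam hkk := by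
  simp only [leafA, leafB, ne_eq, Sum.inr.injEq]
  intro h
  have := congrArg (fun p => (p.1 : ℕ)) h
  simp at this
  omega


lemma dist_leafA_leafB (hk1 : 1 ≤ k) (h0 : 0 < lam ⟨0, by omega⟩) (hkk : 0 < lam ⟨k, by omega⟩) :
    (caterpillar k lam).dist (leafA k lam h0) (leafB k lam hkk) = k + 2 := by
  rw [dist_formula (leafA_ne_leafB hk1 h0 hkk)]
  simp [leafA, leafB, cproj, ell, Nat.dist_eq_sub_of_le (Nat.zero_le k)]

lemma ecc_leafA (hk1 : 1 ≤ k) (h0 : 0 < lam ⟨0, by omega⟩) (hkk : 0 < lam ⟨k, by omega⟩) :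
    ecc (caterpillar k lam) (leafA k lam h0) = k + 2 := by
  refine le_antisymm (ecc_le _) ?_
  rw [← dist_leafA_leafB hk1 h0 hkk]
  exact Finset.le_sup (Finset.mem_univ (leafB k lam hkk))

lemma gdiam_eq (hk1 : 1 ≤ k) (h0 : 0 < lam ⟨0, by omega⟩) (hkk : 0 < lam ⟨k, by omega⟩) :
    gdiam (caterpillar k lam) = k + 2 := by
  refine le_antisymm gdiam_le ?_
  rw [← ecc_leafA hk1 h0 hkk]
  exact Finset.le_sup (Finset.mem_univ (leafA k lam h0))

noncomputable def fopt (k : ℕ) (lam : Fin (k+1) → ℕ) (h0 : 0 < lam ⟨0, by omega⟩)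
    (hkk : 0 < lam ⟨k, by omega⟩) : CatV k lam → ℕ :=
  fun v => if v = leafA k lam h0 then k+1 else if v = leafB k lam hkk then k+1 else 0

lemma fopt_pos {h0 : 0 < lam ⟨0, by omega⟩} {hkk : 0 < lam ⟨k, by omega⟩} {v : CatV k lam}
    (h : 0 < fopt k lam h0 hkk v) :
    v = leafA k lam h0 ∨ v = leafB k lam hkk := by
  by_contra hc
  push_neg at hc
  simp [fopt, hc.1, hc.2] at h

lemma fopt_isIndep (hk1 : 1 ≤ k) (h0 : 0 < lam ⟨0, by omega⟩) (hkk : 0 < lam ⟨k, by omega⟩) :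
    IsIndepBroadcast (caterpillar k lam) (fopt k lam h0 hkk) := by
  constructor
  · intro v
    rcases eq_or_ne v (leafA k lam h0) with rfl | hva
    · rw [ecc_leafA hk1 h0 hkk]
      simp [fopt]
    rcases eq_or_ne v (leafB k lam hkk) with rfl | hvb
    · have hB : ecc (caterpillar k lam) (leafB k lam hkk) = k + 2 := by
        refine le_antisymm (ecc_le _) ?_
        have hd : (caterpillar k lam).dist (leafB k lam hkk) (leafA k lam h0) = k + 2 := by
          rw [SimpleGraph.dist_comm]; exact dist_leafA_leafB hk1 h0 hkk
        rw [← hd]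
        exact Finset.le_sup (Finset.mem_univ (leafA k lam h0))
      rw [hB]
      simp only [fopt, if_neg hva, if_pos rfl, if_true]
      omega
    · simp [fopt, hva, hvb]
  · intro u v huv hu hv
    have hdab := dist_leafA_leafB hk1 h0 hkk
    rcases fopt_pos hu with rfl | rfl <;> rcases fopt_pos hv with rfl | rfl
    · exact absurd rfl huv
    · have hab := leafA_ne_leafB (lam := lam) hk1 h0 hkk
      simp only [fopt, if_pos rfl, if_neg hab.symm, if_neg hab]
      rw [hdab]
      simp
    · have hab := leafA_ne_leafB (lam := lam) hk1 h0 hkk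
      simp only [fopt, if_pos rfl, if_neg hab.symm, if_neg hab]
      rw [SimpleGraph.dist_comm, hdab]
      simp
    · exact absurd rfl huv

lemma fopt_cost (hk1 : 1 ≤ k) (h0 : 0 < lam ⟨0, by omega⟩) (hkk : 0 < lam ⟨k, by omega⟩) :
    cost (fopt k lam h0 hkk) = 2 * k + 2 := by
  have hab := leafA_ne_leafB (lam := lam) hk1 h0 hkk
  rw [cost]
  rw [← Finset.sum_subset (Finset.subset_univ {leafA k lam h0, leafB k lam hkk})
    (by
      intro x _ hx
      simp only [Finset.mem_insert, Finset.mem_singleton] at hx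
      push_neg at hx
      simp [fopt, hx.1, hx.2])]
  rw [Finset.sum_pair hab]
  simp only [fopt, if_pos rfl, if_neg hab.symm, if_neg hab, if_true]
  omega

end Endpoints

section Upper

variable {f : CatV k lam → ℕ}

lemma pair_bound (hf : IsIndepBroadcast (caterpillar k lam) f) {u v : CatV k lam}
    (hu : 0 < f u) (hv : 0 < f v) (huv : u ≠ v) :
    f u + 1 ≤ Nat.dist (cproj u) (cproj v) + ell u + ell v := by
  have h := hf.2 u v huv hu hv
  rw [dist_formula huv] at h
  have := le_max_left (f u) (f v)
  omega

lemma same_proj_one (hf : IsIndepBroadcast (caterpillar k lam) f) {u v : CatV k lam}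
    (hu : 0 < f u) (hv : 0 < f v) (huv : u ≠ v) (hp : cproj u = cproj v) :
    f u = 1 ∧ ∃ p, u = Sum.inr p := by
  have h := hf.2 u v huv hu hv
  rw [dist_formula huv] at h
  have hd : Nat.dist (cproj u) (cproj v) = 0 := by rw [hp, Nat.dist_self]
  have h4 : ell u ≤ 1 := by cases u <;> simp [ell]
  have h5 : ell v ≤ 1 := by cases v <;> simp [ell]
  have hmax := le_max_left (f u) (f v)
  have hmax' := le_max_right (f u) (f v)
  have hellu : ell u = 1 := by omega
  refine ⟨by omega, ?_⟩
  cases u with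
  | inl i => simp [ell] at hellu
  | inr p => exact ⟨p, rfl⟩

lemma group_sum_same (hf : IsIndepBroadcast (caterpillar k lam) f)
    (hlam2 : ∀ i, lam i ≤ 2)
    {S : Finset (CatV k lam)} (hpos : ∀ v ∈ S, 0 < f v) {X : ℕ}
    (hproj : ∀ v ∈ S, cproj v = X) (h2 : 2 ≤ S.card) :
    ∑ v ∈ S, f v ≤ 2 := by
  -- every element has f v = 1
  have hone : ∀ v ∈ S, f v = 1 := by
    intro v hv
    obtain ⟨w, hwS, hwv⟩ := Finset.exists_mem_ne (s := S) (by omega) v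
    exact (same_proj_one hf (hpos v hv) (hpos w hwS) hwv.symm
      (by rw [hproj v hv, hproj w hwS])).1
  -- card ≤ 2
  have hcard : S.card ≤ 2 := by
    by_contra hc
    push_neg at hc
    obtain ⟨u, v, w, hu, hv, hw, huv, huw, hvw⟩ := Finset.two_lt_card_iff.mp (show 2 < S.card by omega)
    obtain ⟨-, pu, rfl⟩ := same_proj_one hf (hpos u hu) (hpos v hv) huv
      (by rw [hproj _ hu, hproj _ hv])
    obtain ⟨-, pv, rfl⟩ := same_proj_one hf (hpos v hv) (hpos w hw) hvw
      (by rw [hproj _ hv, hproj _ hw])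
    obtain ⟨-, pw, rfl⟩ := same_proj_one hf (hpos w hw) (hpos _ hv) hvw.symm
      (by rw [hproj _ hw, hproj _ hv])
    obtain ⟨iu, qu⟩ := pu
    obtain ⟨iv, qv⟩ := pv
    obtain ⟨iw, qw⟩ := pw
    have hiu : (iu : ℕ) = X := hproj _ hu
    have hiv : (iv : ℕ) = X := hproj _ hv
    have hiw : (iw : ℕ) = X := hproj _ hw
    have e1 : iu = iv := Fin.ext (by omega)
    have e2 : iv = iw := Fin.ext (by omega)
    subst e1; subst e2
    have hq1 : qu ≠ qv := by
      intro h; exact huv (by rw [h])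
    have hq2 : qu ≠ qw := by
      intro h; exact huw (by rw [h])
    have hq3 : qv ≠ qw := by
      intro h; exact hvw (by rw [h])
    have hl := hlam2 iu
    have b1 := qu.isLt
    have b2 := qv.isLt
    have b3 := qw.isLt
    have n1 : (qu : ℕ) ≠ (qv : ℕ) := fun h => hq1 (Fin.ext h)
    have n2 : (qu : ℕ) ≠ (qw : ℕ) := fun h => hq2 (Fin.ext h)
    have n3 : (qv : ℕ) ≠ (qw : ℕ) := fun h => hq3 (Fin.ext h)
    omega
  calc ∑ v ∈ S, f v = ∑ v ∈ S, 1 := Finset.sum_congr rfl hone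
  _ = S.card := by simp
  _ ≤ 2 := hcard

lemma group_sum (hf : IsIndepBroadcast (caterpillar k lam) f)
    (hlam2 : ∀ i, lam i ≤ 2)
    (S : Finset (CatV k lam)) (hpos : ∀ v ∈ S, 0 < f v) (X : ℕ)
    (u' : CatV k lam) (hu' : 0 < f u') (hx' : cproj u' ≠ X) :
    ∑ v ∈ S.filter (fun v => cproj v = X), f v ≤ max (Nat.dist X (cproj u') + 1) 2 := by
  set B := S.filter (fun v => cproj v = X) with hB
  have hBpos : ∀ v ∈ B, 0 < f v := fun v hv => hpos v (Finset.mem_filter.mp hv).1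
  have hBproj : ∀ v ∈ B, cproj v = X := fun v hv => (Finset.mem_filter.mp hv).2
  rcases Nat.lt_or_ge B.card 2 with hc | hc
  · interval_cases h : B.card
    · rw [Finset.card_eq_zero.mp h]
      simp
    · obtain ⟨u, hu⟩ := Finset.card_eq_one.mp h
      rw [hu, Finset.sum_singleton]
      have huB : u ∈ B := by rw [hu]; exact Finset.mem_singleton_self u
      have hune : u ≠ u' := by
        intro h'; exact hx' (h' ▸ hBproj u huB)
      have := pair_bound hf (hBpos u huB) hu' hune
      rw [hBproj u huB] at this
      have h4 : ell u ≤ 1 := by cases u <;> simp [ell]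
      have h5 : ell u' ≤ 1 := by cases u' <;> simp [ell]
      have := le_max_left (Nat.dist X (cproj u') + 1) 2
      omega
  · exact le_trans (group_sum_same hf hlam2 hBpos hBproj hc) (le_max_right _ _)

end Upper

section Key

variable {f : CatV k lam → ℕ}

lemma key_lemma (hf : IsIndepBroadcast (caterpillar k lam) f)
    (hlam2 : ∀ i, lam i ≤ 2) :
    ∀ (S : Finset (CatV k lam)) (hne : (S.image cproj).Nonempty),
      (∀ v ∈ S, 0 < f v) → 2 ≤ (S.image cproj).card →
      ∑ v ∈ S, f v + 2 * (S.image cproj).min' hne ≤ 2 * (S.image cproj).max' hne + 2 := by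
  intro S
  induction S using Finset.strongInduction with
  | _ S ih =>
    intro hne hS h2
    set P := S.image cproj with hP
    set X := P.max' hne with hX
    set m := P.min' hne with hm
    have hmX : m < X := Finset.min'_lt_max'_of_card _ (by omega)
    set B := S.filter (fun v => cproj v = X) with hB
    set S' := S.filter (fun v => ¬ cproj v = X) with hS'
    have hsplit : ∑ v ∈ B, f v + ∑ v ∈ S', f v = ∑ v ∈ S, f v :=
      Finset.sum_filter_add_sum_filter_not S _ f
    set P' := S'.image cproj with hP'def
    have hP' : P' = P.erase X := by
      ext y
      simp only [hP'def, hS', hP, Finset.mem_image, Finset.mem_filter, Finset.mem_erase]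
      constructor
      · rintro ⟨v, ⟨hvS, hvX⟩, rfl⟩
        exact ⟨hvX, v, hvS, rfl⟩
      · rintro ⟨hyX, v, hvS, rfl⟩
        exact ⟨v, ⟨hvS, hyX⟩, rfl⟩
    have hXP : X ∈ P := Finset.max'_mem _ _
    obtain ⟨vX, hvXS, hvX⟩ := Finset.mem_image.mp hXP
    have hmP' : m ∈ P' := by
      rw [hP']
      exact Finset.mem_erase.mpr ⟨by omega, Finset.min'_mem _ _⟩
    have hP'ne : P'.Nonempty := ⟨m, hmP'⟩
    set X' := P'.max' hP'ne with hX'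
    have hX'mem : X' ∈ P' := Finset.max'_mem _ _
    have hX'P : X' ∈ P := by
      rw [hP'] at hX'mem
      exact (Finset.mem_erase.mp hX'mem).2
    have hX'neX : X' ≠ X := by
      rw [hP'] at hX'mem
      exact (Finset.mem_erase.mp hX'mem).1
    have hX'ltX : X' < X := lt_of_le_of_ne (Finset.le_max' _ _ hX'P) hX'neX
    obtain ⟨u', hu'S', hu'⟩ := Finset.mem_image.mp hX'mem
    have hu'S : u' ∈ S := (Finset.filter_subset _ _) hu'S'
    have hu'pos : 0 < f u' := hS u' hu'S
    have hu'ne : cproj u' ≠ X := (Finset.mem_filter.mp hu'S').2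
    have hBsum : ∑ v ∈ B, f v ≤ max (Nat.dist X (cproj u') + 1) 2 :=
      group_sum hf hlam2 S hS X u' hu'pos hu'ne
    rw [hu'] at hBsum
    have hdist : Nat.dist X X' = X - X' := Nat.dist_eq_sub_of_le_right hX'ltX.le
    have hmle : m ≤ X' := Finset.min'_le _ _ hX'P
    have hvXpos : 0 < f vX := hS vX hvXS
    rcases Nat.lt_or_ge P.card 3 with hc | hc
    · -- exactly two projection values
      have hP'card : P'.card = 1 := by
        rw [hP', Finset.card_erase_of_mem hXP]; omega
      obtain ⟨y, hy⟩ := Finset.card_eq_one.mp hP'card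
      have hX'y : X' = y := by
        have h3 := hX'mem
        rw [hy, Finset.mem_singleton] at h3
        exact h3
      have hmX' : m = X' := by
        have h3 := hmP'
        rw [hy, Finset.mem_singleton] at h3
        rw [h3, hX'y]
      have hall : ∀ v ∈ S', cproj v = X' := by
        intro v hv
        have h3 : cproj v ∈ P' := Finset.mem_image_of_mem _ hv
        rw [hy, Finset.mem_singleton] at h3
        rw [h3, hX'y]
      have hvXne : cproj vX ≠ X' := by rw [hvX]; omega
      have hS'sum : ∑ v ∈ S', f v ≤ max (Nat.dist X' X + 1) 2 := by
        have h4 := group_sum hf hlam2 S'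
          (fun v hv => hS v (Finset.filter_subset _ _ hv)) X' vX hvXpos hvXne
        rw [Finset.filter_true_of_mem hall, hvX] at h4
        exact h4
      have hd2 : Nat.dist X' X = X - X' := by
        rw [Nat.dist_comm]; exact hdist
      have hm1 : max (Nat.dist X X' + 1) 2 ≤ X - X' + 1 := by
        rw [hdist]; exact max_le le_rfl (by omega)
      have hm2 : max (Nat.dist X' X + 1) 2 ≤ X - X' + 1 := by
        rw [hd2]; exact max_le le_rfl (by omega)
      omega
    · -- at least three projection values
      have hS'ss : S' ⊂ S := Finset.filter_ssubset.mpr ⟨vX, hvXS, by simp [hvX]⟩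
      have hP'card : 2 ≤ P'.card := by
        rw [hP', Finset.card_erase_of_mem hXP]; omega
      have hIH := ih S' hS'ss hP'ne
        (fun v hv => hS v (Finset.filter_subset _ _ hv)) hP'card
      have hminP' : P'.min' hP'ne = m := by
        refine le_antisymm (Finset.min'_le _ _ hmP') ?_
        refine Finset.le_min' _ _ _ (fun y hy => Finset.min'_le _ _ ?_)
        rw [hP'] at hy
        exact (Finset.mem_erase.mp hy).2
      rw [hminP', ← hX'] at hIH
      have hm1 : max (Nat.dist X X' + 1) 2 ≤ 2 * (X - X') := by
        rw [hdist]; exact max_le (by omega) (by omega)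
      omega

end Key

lemma cproj_le (v : CatV k lam) : cproj v ≤ k := by
  cases v with
  | inl i => exact Nat.lt_succ_iff.mp i.isLt
  | inr p => exact Nat.lt_succ_iff.mp p.1.isLt

lemma cost_le {f : CatV k lam → ℕ} (hf : IsIndepBroadcast (caterpillar k lam) f)
    (hlam2 : ∀ i, lam i ≤ 2) : cost f ≤ 2 * k + 2 := by
  classical
  set S := Finset.univ.filter (fun v => f v ≠ 0) with hSdef
  have hS : ∀ v ∈ S, 0 < f v := by
    intro v hv
    have := (Finset.mem_filter.mp hv).2
    omega
  have hcost : cost f = ∑ v ∈ S, f v := by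
    rw [cost]
    exact (Finset.sum_filter_of_ne (fun x _ h => h)).symm
  rw [hcost]
  rcases Nat.lt_or_ge (S.image cproj).card 2 with hc | hc
  · rcases Nat.lt_or_ge (S.image cproj).card 1 with hc0 | hc1
    · have : (S.image cproj) = ∅ := Finset.card_eq_zero.mp (by omega)
      have hSempty : S = ∅ := Finset.image_eq_empty.mp this
      rw [hSempty]
      simp
    · obtain ⟨X, hX⟩ := Finset.card_eq_one.mp (by omega : (S.image cproj).card = 1)
      have hproj : ∀ v ∈ S, cproj v = X := by
        intro v hv
        have : cproj v ∈ S.image cproj := Finset.mem_image_of_mem _ hv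
        rw [hX, Finset.mem_singleton] at this
        exact this
      rcases Nat.lt_or_ge S.card 2 with hsc | hsc
      · rcases Nat.lt_or_ge S.card 1 with hsc0 | hsc1
        · have : S = ∅ := Finset.card_eq_zero.mp (by omega)
          rw [this]; simp
        · obtain ⟨u, hu⟩ := Finset.card_eq_one.mp (by omega : S.card = 1)
          rw [hu, Finset.sum_singleton]
          have h1 := hf.1 u
          have h2 := ecc_le (lam := lam) u
          omega
      · have := group_sum_same hf hlam2 hS hproj hsc
        omega
  · have hne : (S.image cproj).Nonempty := Finset.card_pos.mp (by omega)
    have hkey := key_lemma hf hlam2 S hne hS hc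
    have hmaxle : (S.image cproj).max' hne ≤ k := by
      obtain ⟨v, hv, hveq⟩ := Finset.mem_image.mp (Finset.max'_mem (S.image cproj) hne)
      rw [← hveq]
      exact cproj_le v
    omega

end CatAux

theorem stmt18 (r k : ℕ) (hr : 1 ≤ r) (hk : k = 2 * r) (lam : Fin (k+1) → ℕ)
    (heven : ∀ i : Fin (k+1), Even (i : ℕ) → 1 ≤ lam i ∧ lam i ≤ 2)
    (hodd : ∀ i : Fin (k+1), ¬ Even (i : ℕ) → lam i = 0) :
    betaB (caterpillar k lam) = 4 * r + 2 ∧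
    4 * r + 2 = 2 * gdiam (caterpillar k lam) - 2 := by
  have hk1 : 1 ≤ k := by omega
  have h0 : 0 < lam ⟨0, by omega⟩ := by
    have := (heven ⟨0, by omega⟩ (by simp)).1
    omega
  have hkk : 0 < lam ⟨k, by omega⟩ := by
    have := (heven ⟨k, by omega⟩ (by simpa using ⟨r, by omega⟩)).1
    omega
  have hlam2 : ∀ i, lam i ≤ 2 := by
    intro i
    by_cases h : Even (i : ℕ)
    · exact (heven i h).2
    · rw [hodd i h]; omega
  have hgd : gdiam (caterpillar k lam) = k + 2 := CatAux.gdiam_eq hk1 h0 hkk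
  constructor
  · have hmem : (2 * k + 2) ∈ {c | ∃ f, IsIndepBroadcast (caterpillar k lam) f ∧ cost f = c} :=
      ⟨CatAux.fopt k lam h0 hkk, CatAux.fopt_isIndep hk1 h0 hkk, CatAux.fopt_cost hk1 h0 hkk⟩
    have hub : ∀ c ∈ {c | ∃ f, IsIndepBroadcast (caterpillar k lam) f ∧ cost f = c},
        c ≤ 2 * k + 2 := by
      rintro c ⟨f, hf, rfl⟩
      exact CatAux.cost_le hf hlam2
    have : betaB (caterpillar k lam) = 2 * k + 2 := by
      rw [betaB]
      exact le_antisymm (csSup_le ⟨2 * k + 2, hmem⟩ hub) (le_csSup ⟨2 * k + 2, hub⟩ hmem)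
    omega
  · omega
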